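/- Let α ∈ [1,2), μ > 0, and let x : ℝ → ℝ² \ {0} be an entire zero-energy solution of ẍ = -μ x/|x|^{α+2} with nonzero angular momentum. Then, with r(t) = |x(t)| and γ = (√(μ/(2α))(2+α))^{2/(2+α)}, one has r(t)/|t|^{2/(2+α)} → γ as |t| → +∞. -/

import Mathlib

/-!
Put `q = |x|²` and `u = ⟨x, ẋ⟩`. Zero energy and the Lagrange identity
`⟨x, ẋ⟩² + c² = |x|² |ẋ|²` reduce the equation of motion to the scalar system
`q' = 2u`, `u' = C q^(-α/2)`, `u² = A q^(1-α/2) - c²`, where `A = 2μ/α` and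
`C = A - μ > 0`. So `u` increases, becomes positive, and then `q → ∞`. Along the orbit
`w = q^((2+α)/4)` has `w' = (2+α)/2 · √(A - c² q^((α-2)/2)) → (2+α)/2 · √A`,
hence `w(t)/t` has the same limit, which is the claim raised to the power `(2+α)/2`.
The system is invariant under `(q, u)(t) ↦ (q, -u)(-t)`, which gives the limit at `-∞`.
-/

open Filter

/-- The Euclidean norm on `ℝ × ℝ`. -/
noncomputable def enorm2 (p : ℝ × ℝ) : ℝ := Real.sqrt (p.1 ^ 2 + p.2 ^ 2)

open Topology Set Asymptotics

theorem HasDerivAt.fst {𝕜 E F : Type*} [NontriviallyNormedField 𝕜] [NormedAddCommGroup E]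
    [NormedSpace 𝕜 E] [NormedAddCommGroup F] [NormedSpace 𝕜 F] {f : 𝕜 → E × F} {f' : E × F}
    {t : 𝕜} (h : HasDerivAt f f' t) : HasDerivAt (fun s => (f s).1) f'.1 t :=
  (ContinuousLinearMap.fst 𝕜 E F).hasFDerivAt.comp_hasDerivAt t h

theorem HasDerivAt.snd {𝕜 E F : Type*} [NontriviallyNormedField 𝕜] [NormedAddCommGroup E]
    [NormedSpace 𝕜 E] [NormedAddCommGroup F] [NormedSpace 𝕜 F] {f : 𝕜 → E × F} {f' : E × F}
    {t : 𝕜} (h : HasDerivAt f f' t) : HasDerivAt (fun s => (f s).2) f'.2 t :=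
  (ContinuousLinearMap.snd 𝕜 E F).hasFDerivAt.comp_hasDerivAt t h

theorem add_mul_sub_le_of_le_hasDerivAt {f f' : ℝ → ℝ} {T b : ℝ}
    (hf : ∀ s, T ≤ s → HasDerivAt f (f' s) s) (hb : ∀ s, T ≤ s → b ≤ f' s) {t : ℝ}
    (ht : T ≤ t) : f T + b * (t - T) ≤ f t := by
  have := (convex_Ici T).mul_sub_le_image_sub_of_le_deriv
    (fun s hs => (hf s hs).continuousAt.continuousWithinAt)
    (fun s hs => (hf s (interior_subset hs)).differentiableAt.differentiableWithinAt)
    (fun s hs => (hf s (interior_subset hs)).deriv ▸ hb s (interior_subset hs))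
    T self_mem_Ici t ht ht
  linarith

theorem tendsto_div_atTop_of_hasDerivAt {f f' : ℝ → ℝ} {k : ℝ}
    (hf : ∀ᶠ t in atTop, HasDerivAt f (f' t) t) (hf' : Tendsto f' atTop (𝓝 k)) :
    Tendsto (fun t => f t / t) atTop (𝓝 k) := by
  let g t := f t - k * t
  have hg : g =o[atTop] id := by
    refine isLittleO_iff.2 fun ε hε => ?_
    obtain ⟨T, hT⟩ := eventually_atTop.1 <| (eventually_ge_atTop 0).and <|
      hf.and (hf'.eventually (Metric.closedBall_mem_nhds k (half_pos hε)))
    have hlip : ∀ t, T ≤ t → ‖g t - g T‖ ≤ ε / 2 * ‖t - T‖ := fun t ht =>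
      (convex_Ici T).norm_image_sub_le_of_norm_hasDerivWithin_le (f' := fun s => f' s - k)
        (fun s hs => (((hT s hs).2.1.sub ((hasDerivAt_id s).const_mul k)).congr_deriv
          (by ring)).hasDerivWithinAt)
        (fun s hs => (hT s hs).2.2) self_mem_Ici ht
    filter_upwards [eventually_ge_atTop T, eventually_ge_atTop (2 * ‖g T‖ / ε)] with t ht htg
    have hT0 := (hT T le_rfl).1
    have htri := norm_sub_norm_le (g t) (g T)
    have hgt := hlip t ht
    rw [Real.norm_of_nonneg (by linarith : 0 ≤ t - T)] at hgt
    rw [div_le_iff₀ hε] at htg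
    rw [id, Real.norm_of_nonneg (by linarith : (0 : ℝ) ≤ t)]
    nlinarith [mul_nonneg hε.le hT0]
  have hlim := hg.tendsto_div_nhds_zero.add_const k
  rw [zero_add] at hlim
  refine hlim.congr' ?_
  filter_upwards [eventually_ne_atTop 0] with t ht
  simp only [g, id]
  field_simp
  ring

/-- The radial equations of a zero-energy orbit, for `q = |x|²` and `u = ⟨x, ẋ⟩`;
`B` is the squared angular momentum. -/
structure IsParabolicRadial (A B C β : ℝ) (q u : ℝ → ℝ) : Prop where
  pos : ∀ t, 0 < q t
  hasDerivAt_q : ∀ t, HasDerivAt q (2 * u t) t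
  hasDerivAt_u : ∀ t, HasDerivAt u (C * q t ^ (-(β / 2))) t
  sq_u : ∀ t, u t ^ 2 = A * q t ^ ((2 - β) / 2) - B

namespace IsParabolicRadial

variable {A B C β : ℝ} {q u : ℝ → ℝ}

theorem comp_neg (h : IsParabolicRadial A B C β q u) :
    IsParabolicRadial A B C β (fun t => q (-t)) (fun t => -u (-t)) where
  pos t := h.pos (-t)
  hasDerivAt_q t := ((h.hasDerivAt_q (-t)).comp t (hasDerivAt_neg t)).congr_deriv (by ring)
  hasDerivAt_u t :=
    ((h.hasDerivAt_u (-t)).comp t (hasDerivAt_neg t)).neg.congr_deriv (by ring)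
  sq_u t := by rw [neg_sq]; exact h.sq_u (-t)

theorem monotone_u (h : IsParabolicRadial A B C β q u) (hC : 0 < C) : Monotone u :=
  monotone_of_hasDerivAt_nonneg h.hasDerivAt_u fun t =>
    (mul_pos hC (Real.rpow_pos_of_pos (h.pos t) _)).le

theorem exists_pos_u (h : IsParabolicRadial A B C β q u) (hC : 0 < C) (hβ : 0 ≤ β) :
    ∃ t, 0 < u t := by
  -- Otherwise `q` is nonincreasing, so `u' ≥ C q(0)^(-β/2) > 0` on `[0, ∞)` and `u` reaches 1.
  by_contra! hu
  have hq : Antitone q :=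
    antitone_of_hasDerivAt_nonpos h.hasDerivAt_q fun t => show 2 * u t ≤ 0 by linarith [hu t]
  set δ := C * q 0 ^ (-(β / 2))
  have hδ : 0 < δ := mul_pos hC (Real.rpow_pos_of_pos (h.pos 0) _)
  have hgrowth := add_mul_sub_le_of_le_hasDerivAt (fun s _ => h.hasDerivAt_u s)
    (fun s hs => mul_le_mul_of_nonneg_left
      (Real.rpow_le_rpow_of_nonpos (h.pos s) (hq hs) (by linarith)) hC.le)
    (div_nonneg (by linarith [hu 0]) hδ.le : (0 : ℝ) ≤ (1 - u 0) / δ)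
  have : δ * ((1 - u 0) / δ - 0) = 1 - u 0 := by field_simp; ring
  linarith [hu ((1 - u 0) / δ)]

theorem tendsto_q_atTop (h : IsParabolicRadial A B C β q u) (hC : 0 < C) (hβ : 0 ≤ β) :
    Tendsto q atTop atTop := by
  obtain ⟨t₀, hu₀⟩ := h.exists_pos_u hC hβ
  refine tendsto_atTop_mono' atTop (eventually_atTop.2 ⟨t₀, fun t ht =>
    add_mul_sub_le_of_le_hasDerivAt (b := 2 * u t₀) (fun s _ => h.hasDerivAt_q s)
      (fun s hs => by linarith [h.monotone_u hC hs]) ht⟩) ?_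
  exact tendsto_atTop_add_const_left _ _
    ((tendsto_atTop_add_const_right _ _ tendsto_id).const_mul_atTop (by positivity))

theorem mul_rpow_eq_sqrt (h : IsParabolicRadial A B C β q u) {t : ℝ} (ht : 0 ≤ u t) :
    u t * q t ^ ((β - 2) / 4) = √(A - B * q t ^ ((β - 2) / 2)) := by
  have hq := h.pos t
  rw [← Real.sqrt_sq (mul_nonneg ht (Real.rpow_nonneg hq.le _)), mul_pow, h.sq_u t,
    ← Real.rpow_mul_natCast hq.le, sub_mul, mul_assoc, ← Real.rpow_add hq,
    show (2 - β) / 2 + (β - 2) / 4 * (2 : ℕ) = 0 by push_cast; ring,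
    show (β - 2) / 4 * (2 : ℕ) = (β - 2) / 2 by push_cast; ring, Real.rpow_zero, mul_one]

theorem tendsto_mul_rpow (h : IsParabolicRadial A B C β q u) (hC : 0 < C) (hβ : 0 ≤ β)
    (hβ2 : β < 2) : Tendsto (fun t => u t * q t ^ ((β - 2) / 4)) atTop (𝓝 √A) := by
  have hz : Tendsto (fun t => q t ^ ((β - 2) / 2)) atTop (𝓝 0) := by
    have := (tendsto_rpow_neg_atTop (y := (2 - β) / 2) (by linarith)).comp
      (h.tendsto_q_atTop hC hβ)
    rwa [show -((2 - β) / 2) = (β - 2) / 2 by ring] at this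
  have hsqrt : Tendsto (fun t => √(A - B * q t ^ ((β - 2) / 2))) atTop (𝓝 √A) := by
    simpa using (tendsto_const_nhds.sub (hz.const_mul B)).sqrt
  obtain ⟨t₀, hu₀⟩ := h.exists_pos_u hC hβ
  refine hsqrt.congr' ?_
  filter_upwards [eventually_ge_atTop t₀] with t ht
  exact (h.mul_rpow_eq_sqrt (hu₀.le.trans (h.monotone_u hC ht))).symm

theorem tendsto_sqrt_div_rpow (h : IsParabolicRadial A B C β q u) (hC : 0 < C) (hβ : 0 ≤ β)
    (hβ2 : β < 2) :
    Tendsto (fun t => √(q t) / |t| ^ ((2 : ℝ) / (2 + β))) atTop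
      (𝓝 (((2 + β) / 2 * √A) ^ ((2 : ℝ) / (2 + β)))) := by
  have hw : ∀ t, HasDerivAt (fun s => q s ^ ((2 + β) / 4))
      ((2 + β) / 2 * (u t * q t ^ ((β - 2) / 4))) t := fun t => by
    convert (h.hasDerivAt_q t).rpow_const (p := (2 + β) / 4) (Or.inl (h.pos t).ne') using 1
    rw [show (2 + β) / 4 - 1 = (β - 2) / 4 by ring]
    ring
  have hlim := tendsto_div_atTop_of_hasDerivAt (.of_forall hw)
    ((h.tendsto_mul_rpow hC hβ hβ2).const_mul _)
  refine ((Real.continuousAt_rpow_const _ _ (Or.inr (by positivity))).tendsto.comp hlim).congr' ?_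
  filter_upwards [eventually_gt_atTop 0] with t ht
  have hq := (h.pos t).le
  rw [Function.comp_apply, Real.div_rpow (Real.rpow_nonneg hq _) ht.le, abs_of_pos ht,
    ← Real.rpow_mul hq, Real.sqrt_eq_rpow]
  congr 2
  field_simp
  ring

end IsParabolicRadial

theorem sq_add_sq_pos_of_ne_zero {p : ℝ × ℝ} (hp : p ≠ 0) : 0 < p.1 ^ 2 + p.2 ^ 2 := by
  refine (add_nonneg (sq_nonneg _) (sq_nonneg _)).lt_of_ne' fun h => hp ?_
  have h1 : p.1 = 0 := by nlinarith [sq_nonneg p.1, sq_nonneg p.2]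
  have h2 : p.2 = 0 := by nlinarith [sq_nonneg p.1, sq_nonneg p.2]
  exact Prod.ext h1 h2

theorem enorm2_rpow (p : ℝ × ℝ) (b : ℝ) : enorm2 p ^ b = (p.1 ^ 2 + p.2 ^ 2) ^ (b / 2) := by
  rw [enorm2, Real.sqrt_eq_rpow, ← Real.rpow_mul (by positivity)]
  ring_nf

theorem isParabolicRadial_of_kepler {μ α c : ℝ} {x v : ℝ → ℝ × ℝ} (hα : α ≠ 0)
    (hx0 : ∀ t, x t ≠ 0) (hx : ∀ t, HasDerivAt x (v t) t)
    (hv : ∀ t, HasDerivAt v (-(μ / enorm2 (x t) ^ (α + 2)) • x t) t)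
    (henergy : ∀ t, (1 / 2) * ((v t).1 ^ 2 + (v t).2 ^ 2) = μ / (α * enorm2 (x t) ^ α))
    (hmom : ∀ t, (x t).1 * (v t).2 - (x t).2 * (v t).1 = c) :
    IsParabolicRadial (2 * μ / α) (c ^ 2) (2 * μ / α - μ) α
      (fun t => (x t).1 ^ 2 + (x t).2 ^ 2) (fun t => (x t).1 * (v t).1 + (x t).2 * (v t).2) := by
  have hq t := sq_add_sq_pos_of_ne_zero (hx0 t)
  have hspeed t : (v t).1 ^ 2 + (v t).2 ^ 2
      = 2 * μ / α * ((x t).1 ^ 2 + (x t).2 ^ 2) ^ (-(α / 2)) := by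
    have := henergy t
    rw [enorm2_rpow] at this
    rw [Real.rpow_neg (hq t).le]
    field_simp at this ⊢
    linarith
  refine ⟨hq, fun t => ?_, fun t => ?_, fun t => ?_⟩
  · exact (((hx t).fst.pow 2).add ((hx t).snd.pow 2)).congr_deriv (by ring)
  · refine (((hx t).fst.mul (hv t).fst).add ((hx t).snd.mul (hv t).snd)).congr_deriv ?_
    have hforce : μ / enorm2 (x t) ^ (α + 2) * ((x t).1 ^ 2 + (x t).2 ^ 2)
        = μ * ((x t).1 ^ 2 + (x t).2 ^ 2) ^ (-(α / 2)) := by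
      rw [enorm2_rpow, show (α + 2) / 2 = 1 - -(α / 2) by ring, Real.rpow_sub (hq t),
        Real.rpow_one]
      field_simp [(hq t).ne']
    simp only [Prod.smul_fst, Prod.smul_snd, smul_eq_mul]
    linear_combination hspeed t - hforce
  · rw [← hmom t, show (2 - α) / 2 = 1 + -(α / 2) by ring, Real.rpow_add (hq t), Real.rpow_one]
    linear_combination ((x t).1 ^ 2 + (x t).2 ^ 2) * hspeed t

theorem parabolic_radial_asymptotics_general
    (μ α : ℝ) (hμ : 0 < μ) (hα : 1 ≤ α) (hα' : α < 2)
    (x v : ℝ → ℝ × ℝ) (c : ℝ)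
    (hx0 : ∀ t, x t ≠ 0)
    (hx : ∀ t, HasDerivAt x (v t) t)
    (hv : ∀ t, HasDerivAt v (-(μ / enorm2 (x t) ^ (α + 2)) • x t) t)
    (henergy : ∀ t, (1 / 2) * ((v t).1 ^ 2 + (v t).2 ^ 2) = μ / (α * enorm2 (x t) ^ α))
    (hmom : ∀ t, (x t).1 * (v t).2 - (x t).2 * (v t).1 = c)
    (γ : ℝ) (hγ : γ = (Real.sqrt (μ / (2 * α)) * (2 + α)) ^ ((2:ℝ) / (2 + α))) :
    Tendsto (fun t => enorm2 (x t) / |t| ^ ((2:ℝ) / (2 + α))) atTop (nhds γ) ∧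
    Tendsto (fun t => enorm2 (x t) / |t| ^ ((2:ℝ) / (2 + α))) atBot (nhds γ) := by
  have hα0 : 0 < α := by linarith
  have h := isParabolicRadial_of_kepler hα0.ne' hx0 hx hv henergy hmom
  have hC : 0 < 2 * μ / α - μ := by rw [sub_pos, lt_div_iff₀ hα0]; nlinarith
  have hγ' : γ = ((2 + α) / 2 * √(2 * μ / α)) ^ ((2 : ℝ) / (2 + α)) := by
    rw [hγ, show 2 * μ / α = 2 ^ 2 * (μ / (2 * α)) by field_simp,
      Real.sqrt_mul (by norm_num), Real.sqrt_sq (by norm_num)]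
    ring_nf
  subst hγ'
  refine ⟨h.tendsto_sqrt_div_rpow hC hα0.le hα', ?_⟩
  simpa [Function.comp_def, enorm2] using
    (h.comp_neg.tendsto_sqrt_div_rpow hC hα0.le hα').comp tendsto_neg_atBot_atTop

theorem parabolic_radial_asymptotics
    (μ α : ℝ) (hμ : 0 < μ) (hα : 1 ≤ α) (hα' : α < 2)
    (x v : ℝ → ℝ × ℝ) (c : ℝ) (hc : c ≠ 0)
    (hx0 : ∀ t, x t ≠ 0)
    (hx : ∀ t, HasDerivAt x (v t) t)
    (hv : ∀ t, HasDerivAt v (-(μ / enorm2 (x t) ^ (α + 2)) • x t) t)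
    (henergy : ∀ t, (1 / 2) * ((v t).1 ^ 2 + (v t).2 ^ 2) = μ / (α * enorm2 (x t) ^ α))
    (hmom : ∀ t, (x t).1 * (v t).2 - (x t).2 * (v t).1 = c)
    (γ : ℝ) (hγ : γ = (Real.sqrt (μ / (2 * α)) * (2 + α)) ^ ((2:ℝ) / (2 + α))) :
    Tendsto (fun t => enorm2 (x t) / |t| ^ ((2:ℝ) / (2 + α))) atTop (nhds γ) ∧
    Tendsto (fun t => enorm2 (x t) / |t| ^ ((2:ℝ) / (2 + α))) atBot (nhds γ) :=
  parabolic_radial_asymptotics_general μ α hμ hα hα' x v c hx0 hx hv henergy hmom γ hγ
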